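/- arXiv:2207.11124 — 5 statements merged into one kernel-verified Lean document; each statement's English description precedes it below -/
import Mathlib

section
/- Fix Ω > 0, T > 0, ν > 0, and r_ν as above. For every ε₂ > 0 there exist an integer d ≥ 1 and real coefficients a₁,…,a_d such that for all ω ∈ ℝ with |ω| ≥ Ω, |e^{iωT} r_ν(ω) − Σ_{k=1}^d a_k (iω)^{−k}| ≤ ε₂. -/
/-!
Substituting `t = ω⁻¹` turns `f ω = exp (I ω T) r (ν ω)` into a function of `t` that extends
continuously by `0` at `t = 0`, because `r` vanishes at infinity. On the compact interval
`|t| ≤ Ω⁻¹` Weierstrass approximates it by a complex polynomial `P`, and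
`P (ω⁻¹) = ∑ cₖ Iᵏ (I ω)⁻ᵏ` is a polynomial in `(I ω)⁻¹` with complex coefficients. Since `r` is
even, `f (-ω) = conj (f ω)`, and `(I ω)⁻ᵏ` has the same symmetry; averaging the approximation at
`ω` and `-ω` shows that the real parts of the coefficients approximate just as well. The constant
coefficient is close to the value `0` at `t = 0`, so it can be dropped at the cost of doubling the
error.
-/

open Filter Set Complex Topology Bornology Polynomial ComplexConjugate

theorem continuous_update_comp_inv_zero {𝕜 E : Type*} [NormedField 𝕜] [DecidableEq 𝕜]
    [TopologicalSpace E] [Zero E] {f : 𝕜 → E} (hf : Continuous f)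
    (hf_lim : Tendsto f (cobounded 𝕜) (𝓝 0)) :
    Continuous (Function.update (f ∘ Inv.inv) 0 0) := by
  refine continuous_iff_continuousAt.2 fun t => ?_
  rcases eq_or_ne t 0 with rfl | ht
  · exact continuousAt_update_same.2 (hf_lim.comp tendsto_inv₀_nhdsNE_zero)
  · exact (hf.continuousAt.comp (continuousAt_inv₀ ht)).congr
      (eventually_ne_nhds ht |>.mono fun s hs => (Function.update_of_ne hs _ _).symm)

theorem exists_complex_polynomial_near_of_continuousOn (a b : ℝ) (f : ℝ → ℂ)
    (hf : ContinuousOn f (Icc a b)) (ε : ℝ) (hε : 0 < ε) :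
    ∃ p : ℂ[X], ∀ x ∈ Icc a b, ‖f x - p.eval (x : ℂ)‖ < ε := by
  obtain ⟨p, hp⟩ := exists_polynomial_near_of_continuousOn a b (fun x => (f x).re)
    (continuous_re.comp_continuousOn hf) (ε / 2) (half_pos hε)
  obtain ⟨q, hq⟩ := exists_polynomial_near_of_continuousOn a b (fun x => (f x).im)
    (continuous_im.comp_continuousOn hf) (ε / 2) (half_pos hε)
  have eval_map_ofReal (s : ℝ[X]) (x : ℝ) :
      (s.map (algebraMap ℝ ℂ)).eval (x : ℂ) = ((s.eval x : ℝ) : ℂ) := by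
    rw [eval_map_algebraMap]
    exact (Polynomial.ofReal_eval s x).symm
  refine ⟨p.map (algebraMap ℝ ℂ) + C I * q.map (algebraMap ℝ ℂ), fun x hx => ?_⟩
  calc ‖f x - (p.map (algebraMap ℝ ℂ) + C I * q.map (algebraMap ℝ ℂ)).eval (x : ℂ)‖
      ≤ |(f x).re - p.eval x| + |(f x).im - q.eval x| := by
        refine (norm_le_abs_re_add_abs_im _).trans_eq ?_
        simp [eval_map_ofReal]
    _ < ε / 2 + ε / 2 := by
        rw [abs_sub_comm, abs_sub_comm (f x).im]
        exact add_lt_add (hp x hx) (hq x hx)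
    _ = ε := add_halves ε

theorem Polynomial.eval_inv_eq_sum_mul_zpow {K : Type*} [Field K] (p : K[X]) {u : K} (hu : u ≠ 0)
    (z : K) {n : ℕ} (hn : p.natDegree < n) :
    p.eval z⁻¹ = ∑ k ∈ Finset.range n, p.coeff k * u ^ k * (u * z) ^ (-(k : ℤ)) := by
  rw [eval_eq_sum_range' hn]
  refine Finset.sum_congr rfl fun k _ => ?_
  rw [zpow_neg, zpow_natCast, mul_pow, mul_inv, inv_pow, mul_assoc,
    mul_inv_cancel_left₀ (pow_ne_zero k hu)]

theorem norm_sub_sum_re_mul_le {α : Type*} [Neg α] {f : α → ℂ} {φ : ℕ → α → ℂ}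
    (hf : ∀ x, f (-x) = conj (f x)) (hφ : ∀ k x, φ k (-x) = conj (φ k x))
    (s : Finset ℕ) (c : ℕ → ℂ) {x : α} {ε : ℝ}
    (hx : ‖f x - ∑ k ∈ s, c k * φ k x‖ ≤ ε) (hnx : ‖f (-x) - ∑ k ∈ s, c k * φ k (-x)‖ ≤ ε) :
    ‖f x - ∑ k ∈ s, ((c k).re : ℂ) * φ k x‖ ≤ ε := by
  have hmean : f x - ∑ k ∈ s, ((c k).re : ℂ) * φ k x
      = ((f x - ∑ k ∈ s, c k * φ k x) + conj (f (-x) - ∑ k ∈ s, c k * φ k (-x))) / 2 := by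
    simp only [map_sub, map_sum, map_mul, hf, hφ, conj_conj, re_eq_add_conj, add_div, add_mul,
      Finset.sum_add_distrib, div_mul_eq_mul_div, ← Finset.sum_div]
    ring
  rw [hmean, norm_div, RCLike.norm_ofNat]
  calc _ ≤ (ε + ε) / 2 := by
        gcongr
        exact (norm_add_le _ _).trans (add_le_add hx (by rwa [RCLike.norm_conj]))
    _ = ε := by ring

theorem exists_sum_inv_pow_near_of_tendsto_cobounded {f : ℝ → ℂ} (hf : Continuous f)
    (hf_lim : Tendsto f (cobounded ℝ) (𝓝 0)) {Ω ε : ℝ} (hΩ : 0 < Ω) (hε : 0 < ε) :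
    ∃ d : ℕ, 1 ≤ d ∧ ∃ c : ℕ → ℂ, ‖c 0‖ < ε ∧ ∀ ω : ℝ, Ω ≤ |ω| →
      ‖f ω - ∑ k ∈ Finset.range (d + 1), c k * (I * ω) ^ (-(k : ℤ))‖ < ε := by
  obtain ⟨p, hp⟩ := exists_complex_polynomial_near_of_continuousOn (-Ω⁻¹) Ω⁻¹ _
    (continuous_update_comp_inv_zero hf hf_lim).continuousOn ε hε
  refine ⟨p.natDegree + 1, le_add_self, fun k => p.coeff k * I ^ k, ?_, fun ω hω => ?_⟩
  · have := hp 0 ⟨by simp [hΩ.le], by simp [hΩ.le]⟩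
    rwa [Function.update_self, zero_sub, norm_neg, ofReal_zero, ← coeff_zero_eq_eval_zero,
      ← mul_one (p.coeff 0), ← pow_zero I] at this
  · have hω0 : ω ≠ 0 := by rintro rfl; simp at hω; linarith
    have hmem : ω⁻¹ ∈ Icc (-Ω⁻¹) Ω⁻¹ := abs_le.1 (by rw [abs_inv]; exact inv_anti₀ hΩ hω)
    have := hp ω⁻¹ hmem
    rwa [Function.update_of_ne (inv_ne_zero hω0), Function.comp_apply, inv_inv, ofReal_inv,
      p.eval_inv_eq_sum_mul_zpow I_ne_zero _ (n := p.natDegree + 1 + 1) (by omega)] at this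

theorem exists_real_sum_inv_pow_near_of_tendsto_cobounded {f : ℝ → ℂ} (hf : Continuous f)
    (hf_lim : Tendsto f (cobounded ℝ) (𝓝 0)) (hf_conj : ∀ ω, f (-ω) = conj (f ω))
    {Ω ε : ℝ} (hΩ : 0 < Ω) (hε : 0 < ε) :
    ∃ d : ℕ, 1 ≤ d ∧ ∃ a : ℕ → ℝ, ∀ ω : ℝ, Ω ≤ |ω| →
      ‖f ω - ∑ k ∈ Finset.Icc 1 d, (a k : ℂ) * (I * ω) ^ (-(k : ℤ))‖ ≤ ε := by
  obtain ⟨d, hd, c, hc0, hc⟩ :=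
    exists_sum_inv_pow_near_of_tendsto_cobounded hf hf_lim hΩ (half_pos hε)
  refine ⟨d, hd, fun k => (c k).re, fun ω hω => ?_⟩
  have hreal := norm_sub_sum_re_mul_le hf_conj (φ := fun k (ω : ℝ) => (I * ω) ^ (-(k : ℤ)))
    (by intro k ω; simp) _ c (hc ω hω).le (hc (-ω) (by rwa [abs_neg])).le
  rw [Finset.range_eq_Ico, Finset.sum_eq_sum_Ico_succ_bot (by omega), zero_add,
    Finset.Ico_add_one_right_eq_Icc, Nat.cast_zero, neg_zero, zpow_zero, mul_one] at hreal
  calc _ = ‖(f ω - ((c 0).re + ∑ k ∈ Finset.Icc 1 d, ((c k).re : ℂ) * (I * ω) ^ (-(k : ℤ))))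
          + (c 0).re‖ := by ring_nf
    _ ≤ ε / 2 + ε / 2 := by
        refine (norm_add_le _ _).trans (add_le_add hreal ?_)
        rw [norm_real, Real.norm_eq_abs]
        exact (abs_re_le_norm _).trans hc0.le
    _ = ε := add_halves ε

theorem stmt2_general
    (r : ℝ → ℝ) (hr_cont : Continuous r)
    (hr_even : ∀ ω, r (-ω) = r ω)
    (hr_lim : Tendsto r (cocompact ℝ) (nhds 0))
    (Ω T ν : ℝ) (hΩ : 0 < Ω) (hν : 0 < ν)
    (ε₂ : ℝ) (hε : 0 < ε₂) :
    ∃ d : ℕ, 1 ≤ d ∧ ∃ a : ℕ → ℝ,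
      ∀ ω : ℝ, Ω ≤ |ω| →
        ‖Complex.exp (Complex.I * ω * T) * (r (ν * ω) : ℂ) -
          ∑ k ∈ Finset.Icc 1 d, (a k : ℂ) * (Complex.I * ω) ^ (-(k : ℤ))‖ ≤ ε₂ := by
  set f : ℝ → ℂ := fun ω => exp (I * ω * T) * r (ν * ω) with hf_def
  have hf_conj : ∀ ω, f (-ω) = conj (f ω) := by
    intro ω
    simp only [hf_def, map_mul, ← exp_conj, conj_I, conj_ofReal, mul_neg, hr_even, ofReal_neg,
      neg_mul]
  have hf_lim : Tendsto f (cobounded ℝ) (𝓝 0) := by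
    have hf_norm : ∀ ω, ‖f ω‖ = |r (ν * ω)| := by simp [hf_def, norm_exp]
    rw [Metric.cobounded_eq_cocompact, tendsto_zero_iff_norm_tendsto_zero]
    simpa only [hf_norm, Function.comp_def, Real.norm_eq_abs, norm_zero] using
      (hr_lim.comp (tendsto_cocompact_mul_left₀ hν.ne')).norm
  exact exists_real_sum_inv_pow_near_of_tendsto_cobounded (by fun_prop) hf_lim hf_conj hΩ hε

theorem stmt2
    (r : ℝ → ℝ) (hr_cont : Continuous r)
    (hr_pos : ∀ ω, 0 < r ω) (hr_le : ∀ ω, r ω ≤ 1)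
    (hr0 : r 0 = 1) (hr_even : ∀ ω, r (-ω) = r ω)
    (hr_anti : AntitoneOn r (Set.Ici 0))
    (hr_lim : Tendsto r (cocompact ℝ) (nhds 0))
    (Ω T ν : ℝ) (hΩ : 0 < Ω) (hT : 0 < T) (hν : 0 < ν)
    (ε₂ : ℝ) (hε : 0 < ε₂) :
    ∃ d : ℕ, 1 ≤ d ∧ ∃ a : ℕ → ℝ,
      ∀ ω : ℝ, Ω ≤ |ω| →
        ‖Complex.exp (Complex.I * ω * T) * (r (ν * ω) : ℂ) -
          ∑ k ∈ Finset.Icc 1 d, (a k : ℂ) * (Complex.I * ω) ^ (-(k : ℤ))‖ ≤ ε₂ :=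
  stmt2_general r hr_cont hr_even hr_lim Ω T ν hΩ hν ε₂ hε
end

section
/- Fix Ω > 0, T > 0, ν > 0, and r_ν as above. For every ε > 0 there exist d ≥ 1 and real numbers γ₁,…,γ_d with γ_{2m+1} = 0 for all integers m ≥ 0 (only even-index coefficients nonzero) such that sup_{|ω| ≥ Ω} |cos(Tω) r_ν(ω) − Σ_{k=1}^d γ_k ω^{−k}| ≤ ε. -/
/-!
Substituting `x = ω⁻¹` turns an even continuous `f` vanishing at infinity into an even continuous
`g` on `[-Ω⁻¹, Ω⁻¹]` with `g 0 = 0`. Take a Weierstrass polynomial `p` within `ε / 2` of `g`.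
Its even part minus its constant term `p 0` (itself within `ε / 2` of `g 0 = 0`) is within `ε`
of `g`, and consists of even monomials of positive degree only, i.e. of terms `γ k ω⁻ᵏ` with
`γ k = 0` for odd `k`.
-/

open MeasureTheory Filter Set
open scoped Topology Polynomial
open Bornology Polynomial

theorem continuous_update_comp_inv {𝕜 E : Type*} [NormedField 𝕜] [DecidableEq 𝕜]
    [TopologicalSpace E] {f : 𝕜 → E} {y : E} (hf : Continuous f)
    (hf_lim : Tendsto f (cobounded 𝕜) (𝓝 y)) :
    Continuous (Function.update (fun x => f x⁻¹) 0 y) := by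
  refine continuous_iff_continuousAt.2 fun x => ?_
  rcases eq_or_ne x 0 with rfl | hx
  · exact continuousAt_update_same.2 (hf_lim.comp tendsto_inv₀_nhdsNE_zero)
  · exact (continuousAt_update_of_ne hx).2 (hf.continuousAt.comp (continuousAt_inv₀ hx))

theorem Polynomial.eval_add_eval_neg {R : Type*} [CommRing R] (p : R[X]) {n : ℕ}
    (hn : p.natDegree < n) (x : R) :
    p.eval x + p.eval (-x) =
      2 * ∑ k ∈ Finset.range n, (if Even k then p.coeff k else 0) * x ^ k := by
  rw [eval_eq_sum_range' hn, eval_eq_sum_range' hn, ← Finset.sum_add_distrib, Finset.mul_sum]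
  refine Finset.sum_congr rfl fun k _ => ?_
  rcases Nat.even_or_odd k with hk | hk
  · rw [hk.neg_pow, if_pos hk]; ring
  · rw [hk.neg_pow, if_neg (Nat.not_even_iff_odd.2 hk)]; ring

theorem exists_even_inv_pow_sum_near {f : ℝ → ℝ} (hf : Continuous f)
    (hf_even : ∀ ω, f (-ω) = f ω) (hf_lim : Tendsto f (cobounded ℝ) (𝓝 0))
    {Ω ε : ℝ} (hΩ : 0 < Ω) (hε : 0 < ε) :
    ∃ d : ℕ, 1 ≤ d ∧ ∃ γ : ℕ → ℝ, (∀ m : ℕ, γ (2 * m + 1) = 0) ∧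
      ∀ ω : ℝ, Ω ≤ |ω| → |f ω - ∑ k ∈ Finset.Icc 1 d, γ k * ω ^ (-(k : ℤ))| ≤ ε := by
  obtain ⟨p, hp⟩ := exists_polynomial_near_of_continuousOn (-Ω⁻¹) Ω⁻¹
    (Function.update (fun x => f x⁻¹) 0 0)
    (continuous_update_comp_inv hf hf_lim).continuousOn (ε / 2) (by positivity)
  set γ : ℕ → ℝ := fun k => if Even k then p.coeff k else 0
  refine ⟨p.natDegree + 1, le_add_self, γ, fun m => if_neg (by simp), fun ω hω => ?_⟩
  have hω0 : ω ≠ 0 := by rintro rfl; rw [abs_zero] at hω; linarith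
  have hx : |ω⁻¹| ≤ Ω⁻¹ := by rw [abs_inv]; exact inv_anti₀ hΩ hω
  have hsum : 2 * ∑ k ∈ Finset.Icc 1 (p.natDegree + 1), γ k * ω ^ (-(k : ℤ))
      = p.eval ω⁻¹ + p.eval (-ω⁻¹) - 2 * p.eval 0 := by
    rw [p.eval_add_eval_neg (by omega : p.natDegree < p.natDegree + 1 + 1),
      Finset.sum_range_eq_add_Ico _ (by omega), Finset.Ico_add_one_right_eq_Icc,
      coeff_zero_eq_eval_zero]
    simp only [γ, zpow_neg, zpow_natCast, inv_pow, ite_mul, zero_mul, Even.zero, ↓reduceIte,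
      pow_zero, mul_one]
    ring
  have hnear := hp ω⁻¹ (abs_le.1 hx)
  have hnear_neg := hp (-ω⁻¹) (abs_le.1 (by rwa [abs_neg]))
  have hnear_zero := hp 0 ⟨by simp [hΩ.le], by simp [hΩ.le]⟩
  rw [Function.update_of_ne (inv_ne_zero hω0), inv_inv] at hnear
  rw [Function.update_of_ne (neg_ne_zero.2 (inv_ne_zero hω0)), inv_neg, inv_inv, hf_even]
    at hnear_neg
  rw [Function.update_self, sub_zero] at hnear_zero
  rw [abs_lt] at hnear hnear_neg hnear_zero
  rw [abs_le]
  constructor <;> linarith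

theorem stmt3_general
    (r : ℝ → ℝ) (hr_cont : Continuous r)
    (hr_even : ∀ ω, r (-ω) = r ω)
    (hr_lim : Tendsto r (cocompact ℝ) (nhds 0))
    (Ω T ν : ℝ) (hΩ : 0 < Ω) (hν : 0 < ν)
    (ε : ℝ) (hε : 0 < ε) :
    ∃ d : ℕ, 1 ≤ d ∧ ∃ γ : ℕ → ℝ, (∀ m : ℕ, γ (2 * m + 1) = 0) ∧
      ∀ ω : ℝ, Ω ≤ |ω| →
        |Real.cos (T * ω) * r (ν * ω) -
          ∑ k ∈ Finset.Icc 1 d, γ k * ω ^ (-(k : ℤ))| ≤ ε := by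
  rw [← Metric.cobounded_eq_cocompact] at hr_lim
  have hcos_bdd : IsBoundedUnder (· ≤ ·) (cobounded ℝ) (fun ω => ‖Real.cos (T * ω)‖) :=
    isBoundedUnder_of ⟨1, fun ω => Real.abs_cos_le_one (T * ω)⟩
  refine exists_even_inv_pow_sum_near (f := fun ω => Real.cos (T * ω) * r (ν * ω))
    (by fun_prop) (fun ω => ?_)
    (isBoundedUnder_le_mul_tendsto_zero hcos_bdd
      (hr_lim.comp (tendsto_mul_left_cobounded hν.ne'))) hΩ hε
  simp only [mul_neg, Real.cos_neg, hr_even]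

theorem stmt3
    (r : ℝ → ℝ) (hr_cont : Continuous r)
    (hr_pos : ∀ ω, 0 < r ω) (hr_le : ∀ ω, r ω ≤ 1)
    (hr0 : r 0 = 1) (hr_even : ∀ ω, r (-ω) = r ω)
    (hr_anti : AntitoneOn r (Set.Ici 0))
    (hr_lim : Tendsto r (cocompact ℝ) (nhds 0))
    (Ω T ν : ℝ) (hΩ : 0 < Ω) (hT : 0 < T) (hν : 0 < ν)
    (ε : ℝ) (hε : 0 < ε) :
    ∃ d : ℕ, 1 ≤ d ∧ ∃ γ : ℕ → ℝ, (∀ m : ℕ, γ (2 * m + 1) = 0) ∧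
      ∀ ω : ℝ, Ω ≤ |ω| →
        |Real.cos (T * ω) * r (ν * ω) -
          ∑ k ∈ Finset.Icc 1 d, γ k * ω ^ (-(k : ℤ))| ≤ ε :=
  stmt3_general r hr_cont hr_even hr_lim Ω T ν hΩ hν ε hε
end

section
/- Fix Ω > 0, T > 0, ν > 0, and r_ν as above. For every ε > 0 there exist d ≥ 1 and real numbers γ₁,…,γ_d with γ_{2m} = 0 for all integers m ≥ 1 (only odd-index coefficients nonzero) such that sup_{|ω| ≥ Ω} |sin(Tω) r_ν(ω) − Σ_{k=1}^d γ_k ω^{−k}| ≤ ε. -/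
/-!
Put x = ω⁻¹. Since r(νω) → 0 as |ω| → ∞, the odd function g(x) = sin(T/x) r(ν/x) extends
continuously by g(0) = 0, so by Weierstrass some polynomial p approximates it on [-Ω⁻¹, Ω⁻¹].
As g is odd, the odd part (p(x) - p(-x))/2 approximates g equally well, and it is a sum of odd
powers of x = ω⁻¹.
-/

open MeasureTheory Filter Set

open Topology Polynomial

theorem continuous_update_comp_inv_s4 {𝕜 E : Type*} [NormedField 𝕜] [DecidableEq 𝕜]
    [TopologicalSpace E] {f : 𝕜 → E} {y : E} (hf : ContinuousOn f {0}ᶜ)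
    (hlim : Tendsto f (Bornology.cobounded 𝕜) (𝓝 y)) :
    Continuous (Function.update (f ∘ Inv.inv) 0 y) := by
  refine continuous_iff_continuousAt.2 fun x => ?_
  rcases eq_or_ne x 0 with rfl | hx
  · exact continuousAt_update_same.2 (hlim.comp tendsto_inv₀_nhdsNE_zero)
  · rw [continuousAt_update_of_ne hx]
    exact (hf.continuousAt (isOpen_compl_singleton.mem_nhds (inv_ne_zero hx))).comp
      (continuousAt_inv₀ hx)

theorem Function.Odd.update_comp_inv {𝕜 β : Type*} [DivisionRing 𝕜] [DecidableEq 𝕜]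
    [NegZeroClass β] {f : 𝕜 → β} (hf : f.Odd) : (Function.update (f ∘ Inv.inv) 0 0).Odd := by
  intro x
  rcases eq_or_ne x 0 with rfl | hx
  · simp
  · simp [Function.update_of_ne hx, Function.update_of_ne (neg_ne_zero.2 hx), inv_neg, hf.eq]

theorem Polynomial.eval_sub_eval_neg {R : Type*} [CommRing R] (p : R[X]) {n : ℕ}
    (hn : p.natDegree < n) (x : R) :
    p.eval x - p.eval (-x) =
      2 * ∑ k ∈ Finset.range n, (if Even k then 0 else p.coeff k) * x ^ k := by
  rw [eval_eq_sum_range' hn, eval_eq_sum_range' hn, ← Finset.sum_sub_distrib, Finset.mul_sum]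
  refine Finset.sum_congr rfl fun k _ => ?_
  rcases Nat.even_or_odd k with hk | hk
  · simp [hk, hk.neg_pow]
  · simp [Nat.not_even_iff_odd.2 hk, hk.neg_pow]
    ring

theorem exists_odd_sum_near_of_continuousOn {a ε : ℝ} {g : ℝ → ℝ}
    (hg : ContinuousOn g (Icc (-a) a)) (hodd : g.Odd) (hε : 0 < ε) :
    ∃ d : ℕ, 1 ≤ d ∧ ∃ γ : ℕ → ℝ, (∀ k, Even k → γ k = 0) ∧
      ∀ x ∈ Icc (-a) a, |g x - ∑ k ∈ Finset.Icc 1 d, γ k * x ^ k| < ε := by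
  obtain ⟨p, hp⟩ := exists_polynomial_near_of_continuousOn (-a) a g hg ε hε
  set d := max p.natDegree 1
  set γ : ℕ → ℝ := fun k => if Even k then 0 else p.coeff k
  refine ⟨d, le_max_right _ _, γ, fun k hk => if_pos hk, fun x hx => ?_⟩
  have hsum : ∑ k ∈ Finset.Icc 1 d, γ k * x ^ k = ∑ k ∈ Finset.range (d + 1), γ k * x ^ k := by
    rw [Finset.range_eq_Ico, Finset.sum_eq_sum_Ico_succ_bot (by omega),
      Finset.Ico_add_one_right_eq_Icc]
    simp [γ]
  have hodd_part := p.eval_sub_eval_neg (Nat.lt_succ_of_le (le_max_left _ 1)) x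
  have hx' : -x ∈ Icc (-a) a := by constructor <;> linarith [hx.1, hx.2]
  have h₁ := abs_lt.1 (hp x hx)
  have h₂ := abs_lt.1 (hp (-x) hx')
  rw [hsum, abs_lt]
  constructor <;> linarith [hodd.eq x]

theorem stmt4_general
    (r : ℝ → ℝ) (hr_cont : Continuous r)
    (hr_even : ∀ ω, r (-ω) = r ω)
    (hr_lim : Tendsto r (cocompact ℝ) (nhds 0))
    (Ω T ν : ℝ) (hΩ : 0 < Ω) (hν : 0 < ν)
    (ε : ℝ) (hε : 0 < ε) :
    ∃ d : ℕ, 1 ≤ d ∧ ∃ γ : ℕ → ℝ, (∀ m : ℕ, 1 ≤ m → γ (2 * m) = 0) ∧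
      ∀ ω : ℝ, Ω ≤ |ω| →
        |Real.sin (T * ω) * r (ν * ω) -
          ∑ k ∈ Finset.Icc 1 d, γ k * ω ^ (-(k : ℤ))| ≤ ε := by
  set f : ℝ → ℝ := fun ω => Real.sin (T * ω) * r (ν * ω)
  have hf_odd : f.Odd := fun ω => by simp [f, mul_neg, Real.sin_neg, hr_even]
  have hf_lim : Tendsto f (Bornology.cobounded ℝ) (𝓝 0) := by
    rw [← Metric.cobounded_eq_cocompact] at hr_lim
    exact isBoundedUnder_le_mul_tendsto_zero
      (isBoundedUnder_of ⟨1, fun ω => by simpa using Real.abs_sin_le_one (T * ω)⟩)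
      (hr_lim.comp (tendsto_mul_left_cobounded hν.ne'))
  obtain ⟨d, hd, γ, hγ, hγg⟩ := exists_odd_sum_near_of_continuousOn (a := Ω⁻¹)
    (continuous_update_comp_inv_s4 (by fun_prop) hf_lim).continuousOn hf_odd.update_comp_inv hε
  refine ⟨d, hd, γ, fun m _ => hγ _ (even_two_mul m), fun ω hω => ?_⟩
  have hω0 : ω ≠ 0 := by rintro rfl; rw [abs_zero] at hω; linarith
  have hmem : ω⁻¹ ∈ Icc (-Ω⁻¹) Ω⁻¹ := abs_le.1 (by rw [abs_inv]; exact inv_anti₀ hΩ hω)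
  simpa [Function.update_of_ne (inv_ne_zero hω0), zpow_neg, inv_pow, f] using (hγg _ hmem).le

theorem stmt4
    (r : ℝ → ℝ) (hr_cont : Continuous r)
    (hr_pos : ∀ ω, 0 < r ω) (hr_le : ∀ ω, r ω ≤ 1)
    (hr0 : r 0 = 1) (hr_even : ∀ ω, r (-ω) = r ω)
    (hr_anti : AntitoneOn r (Set.Ici 0))
    (hr_lim : Tendsto r (cocompact ℝ) (nhds 0))
    (Ω T ν : ℝ) (hΩ : 0 < Ω) (hT : 0 < T) (hν : 0 < ν)
    (ε : ℝ) (hε : 0 < ε) :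
    ∃ d : ℕ, 1 ≤ d ∧ ∃ γ : ℕ → ℝ, (∀ m : ℕ, 1 ≤ m → γ (2 * m) = 0) ∧
      ∀ ω : ℝ, Ω ≤ |ω| →
        |Real.sin (T * ω) * r (ν * ω) -
          ∑ k ∈ Finset.Icc 1 d, γ k * ω ^ (-(k : ℤ))| ≤ ε :=
  stmt4_general r hr_cont hr_even hr_lim Ω T ν hΩ hν ε hε
end

section
/- Let x : ℝ → ℝ be bounded continuous with Fourier transform X ∈ L¹(ℝ, ℂ), so that x(t) = (1/2π)∫ e^{iωt} X(ω) dω. Suppose X(ω) = 0 for |ω| < Ω. Let ψ_d(iω) = Σ_{k=1}^d a_k (iω)^{−k} with a_k ∈ ℝ, and define ŷ(t) = (1/2π)∫ e^{iωt} ψ_d(iω) X(ω) dω. If ∫(1 − r_ν(ω))|X(ω)|dω ≤ ε₁ and sup_{|ω|≥Ω} |e^{iωT} r_ν(ω) − ψ_d(iω)| ≤ ε₂ with ε₁ + ε₂ ≤ 2πε and ∫|X(ω)|dω ≤ 1, then sup_{t∈ℝ} |x(t+T) − ŷ(t)| ≤ ε. -/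
open MeasureTheory Filter Set Complex

/-!
Subtracting the two inversion formulas, `x (t + T) - ŷ t` is `1 / 2π` times the integral of
`e^{iωt} (e^{iωT} - ψ_d(iω)) X(ω)`. Only frequencies with `|ω| ≥ Ω` contribute, and there
`|e^{iωT} - ψ_d(iω)| ≤ (1 - r_ν(ω)) + |e^{iωT} r_ν(ω) - ψ_d(iω)| ≤ (1 - r_ν(ω)) + ε₂`,
so the integral is at most `ε₁ + ε₂ ∫ |X| ≤ ε₁ + ε₂ ≤ 2πε`.
-/

theorem norm_integral_sub_integral_le {α E : Type*} [MeasurableSpace α] {μ : Measure α}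
    [NormedAddCommGroup E] [NormedSpace ℝ E] {f g : α → E} {B : α → ℝ}
    (hf : Integrable f μ) (hg : AEStronglyMeasurable g μ) (hB : Integrable B μ)
    (hfg : ∀ᵐ a ∂μ, ‖f a - g a‖ ≤ B a) :
    ‖∫ a, f a ∂μ - ∫ a, g a ∂μ‖ ≤ ∫ a, B a ∂μ := by
  have hfg_int : Integrable (fun a => f a - g a) μ :=
    hB.mono' (hf.aestronglyMeasurable.sub hg) hfg
  have hg_int : Integrable g μ :=
    (hf.sub hfg_int).congr (ae_of_all _ fun a => sub_sub_cancel _ _)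
  rw [← integral_sub hf hg_int]
  exact norm_integral_le_of_norm_le hB hfg

lemma norm_exp_I_mul_ofReal_mul_ofReal (ω t : ℝ) : ‖exp (I * ω * t)‖ = 1 := by
  rw [show I * (ω : ℂ) * t = ((ω * t : ℝ) : ℂ) * I by push_cast; ring]
  exact norm_exp_ofReal_mul_I _

lemma norm_sub_le_one_sub_add_norm_mul_ofReal_sub {e ψ : ℂ} (he : ‖e‖ = 1) {r : ℝ}
    (hr : r ≤ 1) : ‖e - ψ‖ ≤ (1 - r) + ‖e * r - ψ‖ :=
  calc ‖e - ψ‖ = ‖e * ((1 - r : ℝ) : ℂ) + (e * r - ψ)‖ := by push_cast; ring_nf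
    _ ≤ ‖e * ((1 - r : ℝ) : ℂ)‖ + ‖e * r - ψ‖ := norm_add_le _ _
    _ = (1 - r) + ‖e * r - ψ‖ := by
      rw [norm_mul, he, one_mul, norm_real, Real.norm_of_nonneg (by linarith)]

lemma norm_exp_shift_mul_sub_le {ω t T r ε₂ : ℝ} {ψ z : ℂ} (hr : r ≤ 1)
    (hψ : ‖exp (I * ω * T) * r - ψ‖ ≤ ε₂) :
    ‖exp (I * ω * ↑(t + T)) * z - exp (I * ω * t) * ψ * z‖ ≤ (1 - r) * ‖z‖ + ε₂ * ‖z‖ := by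
  have hshift : exp (I * ω * ↑(t + T)) * z - exp (I * ω * t) * ψ * z =
      exp (I * ω * t) * ((exp (I * ω * T) - ψ) * z) := by
    rw [ofReal_add, mul_add, exp_add]
    ring
  rw [hshift, norm_mul, norm_exp_I_mul_ofReal_mul_ofReal, one_mul, norm_mul, ← add_mul]
  gcongr
  exact (norm_sub_le_one_sub_add_norm_mul_ofReal_sub
    (norm_exp_I_mul_ofReal_mul_ofReal ω T) hr).trans (by linarith)

theorem stmt6_general
    (Ω T ε ε₁ ε₂ : ℝ)
    (hε₂ : 0 < ε₂)
    (rν : ℝ → ℝ) (hrν : ∀ ω, rν ω ∈ Set.Ioc (0 : ℝ) 1) (hrν_meas : Measurable rν)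
    (x : ℝ → ℝ)
    (X : ℝ → ℂ) (hX_int : Integrable X)
    (hX_norm : (∫ ω, ‖X ω‖) ≤ 1)
    (hgap : ∀ ω : ℝ, |ω| < Ω → X ω = 0)
    (hinv : ∀ t : ℝ, (x t : ℂ) =
      (1 / (2 * Real.pi)) * ∫ ω : ℝ, Complex.exp (Complex.I * ω * t) * X ω)
    (d : ℕ) (a : ℕ → ℝ)
    (yhat : ℝ → ℂ)
    (hyhat : ∀ t : ℝ, yhat t = (1 / (2 * Real.pi)) *
      ∫ ω : ℝ, Complex.exp (Complex.I * ω * t) *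
        (∑ k ∈ Finset.Icc 1 d, (a k : ℂ) * (Complex.I * ω) ^ (-(k : ℤ))) * X ω)
    (h1 : (∫ ω, (1 - rν ω) * ‖X ω‖) ≤ ε₁)
    (h2 : ∀ ω : ℝ, Ω ≤ |ω| →
      ‖Complex.exp (Complex.I * ω * T) * (rν ω : ℂ) -
        ∑ k ∈ Finset.Icc 1 d, (a k : ℂ) * (Complex.I * ω) ^ (-(k : ℤ))‖ ≤ ε₂)
    (hsum : ε₁ + ε₂ ≤ 2 * Real.pi * ε) :
    ∀ t : ℝ, ‖(x (t + T) : ℂ) - yhat t‖ ≤ ε := by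
  intro t
  have hpointwise : ∀ ω : ℝ, ‖exp (I * ω * ↑(t + T)) * X ω - exp (I * ω * t) *
      (∑ k ∈ Finset.Icc 1 d, (a k : ℂ) * (I * ω) ^ (-(k : ℤ))) * X ω‖ ≤
      (1 - rν ω) * ‖X ω‖ + ε₂ * ‖X ω‖ := fun ω => by
    by_cases hX : X ω = 0
    · simp [hX]
    · exact norm_exp_shift_mul_sub_le (hrν ω).2 (h2 ω (not_lt.1 (mt (hgap ω) hX)))
  have hr_int : Integrable (fun ω => (1 - rν ω) * ‖X ω‖) := by
    refine hX_int.norm.bdd_mul (c := 1) (measurable_const.sub hrν_meas).aestronglyMeasurable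
      (ae_of_all _ fun ω => ?_)
    obtain ⟨hr_pos, hr_le_one⟩ := hrν ω
    rw [Real.norm_of_nonneg (sub_nonneg.2 hr_le_one)]
    linarith
  have herr := norm_integral_sub_integral_le (μ := volume)
    (hX_int.bdd_mul (c := 1) (by fun_prop) (ae_of_all _ fun ω =>
      (norm_exp_I_mul_ofReal_mul_ofReal ω (t + T)).le))
    (by fun_prop) (B := fun ω => (1 - rν ω) * ‖X ω‖ + ε₂ * ‖X ω‖)
    (hr_int.add (hX_int.norm.const_mul ε₂)) (ae_of_all _ hpointwise)
  rw [integral_add hr_int (hX_int.norm.const_mul ε₂), integral_const_mul] at herr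
  rw [hinv, hyhat, ← mul_sub, norm_mul, norm_div, norm_one, norm_mul, Complex.norm_two, norm_real,
    Real.norm_of_nonneg Real.pi_pos.le, one_div_mul_eq_div, div_le_iff₀ (by positivity)]
  linarith [mul_le_mul_of_nonneg_left hX_norm hε₂.le]

theorem stmt6
    (Ω T ν ε ε₁ ε₂ : ℝ) (hΩ : 0 < Ω) (hT : 0 < T) (hν : 0 < ν)
    (hε : 0 < ε) (hε₁ : 0 < ε₁) (hε₂ : 0 < ε₂)
    (rν : ℝ → ℝ) (hrν : ∀ ω, rν ω ∈ Set.Ioc (0 : ℝ) 1) (hrν_meas : Measurable rν)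
    (x : ℝ → ℝ) (hx_cont : Continuous x) (hx_bdd : ∃ C, ∀ t, |x t| ≤ C)
    (X : ℝ → ℂ) (hX_int : Integrable X)
    (hX_norm : (∫ ω, ‖X ω‖) ≤ 1)
    (hgap : ∀ ω : ℝ, |ω| < Ω → X ω = 0)
    (hinv : ∀ t : ℝ, (x t : ℂ) =
      (1 / (2 * Real.pi)) * ∫ ω : ℝ, Complex.exp (Complex.I * ω * t) * X ω)
    (d : ℕ) (a : ℕ → ℝ)
    (yhat : ℝ → ℂ)
    (hyhat : ∀ t : ℝ, yhat t = (1 / (2 * Real.pi)) *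
      ∫ ω : ℝ, Complex.exp (Complex.I * ω * t) *
        (∑ k ∈ Finset.Icc 1 d, (a k : ℂ) * (Complex.I * ω) ^ (-(k : ℤ))) * X ω)
    (h1 : (∫ ω, (1 - rν ω) * ‖X ω‖) ≤ ε₁)
    (h2 : ∀ ω : ℝ, Ω ≤ |ω| →
      ‖Complex.exp (Complex.I * ω * T) * (rν ω : ℂ) -
        ∑ k ∈ Finset.Icc 1 d, (a k : ℂ) * (Complex.I * ω) ^ (-(k : ℤ))‖ ≤ ε₂)
    (hsum : ε₁ + ε₂ ≤ 2 * Real.pi * ε) :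
    ∀ t : ℝ, ‖(x (t + T) : ℂ) - yhat t‖ ≤ ε :=
  stmt6_general Ω T ε ε₁ ε₂ hε₂ rν hrν hrν_meas x X hX_int hX_norm hgap hinv d a yhat hyhat h1 h2
    hsum
end

section
/- Let g : {ω ∈ ℝ : |ω| ≥ Ω} → ℝ be continuous, vanishing at infinity, and odd (g(−ω) = −g(ω)). Then for every ε > 0 there exist d and real coefficients b₀,…,b_d such that sup_{|ω| ≥ Ω} |g(ω) − Σ_{m=0}^{d} b_m ω^{−(2m+1)}| ≤ ε. -/
/-!
Substituting x = ω⁻¹ turns g into a function h(x) = g(x⁻¹) on the compact interval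
[-Ω⁻¹, Ω⁻¹], continuous at 0 because g vanishes at infinity, and odd because g is.
Weierstrass gives a polynomial p uniformly ε-close to h; since h is odd, the odd part
(p(x) - p(-x))/2 of p is still ε-close to h, and it is a polynomial in odd powers of x = ω⁻¹.
-/

open Filter Set Topology

lemma sum_range_two_mul_sub_neg_div_two (c : ℕ → ℝ) (x : ℝ) (k : ℕ) :
    ((∑ n ∈ Finset.range (2 * k), c n * x ^ n) - ∑ n ∈ Finset.range (2 * k), c n * (-x) ^ n) / 2
      = ∑ m ∈ Finset.range k, c (2 * m + 1) * x ^ (2 * m + 1) := by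
  induction k with
  | zero => simp
  | succ k ih =>
    simp only [show 2 * (k + 1) = 2 * k + 1 + 1 by ring, Finset.sum_range_succ,
      (even_two_mul k).neg_pow, (odd_two_mul_add_one k).neg_pow, ← ih]
    ring

lemma Polynomial.eval_sub_eval_neg_div_two (p : Polynomial ℝ) (x : ℝ) {k : ℕ}
    (hk : p.natDegree < 2 * k) :
    (p.eval x - p.eval (-x)) / 2 = ∑ m ∈ Finset.range k, p.coeff (2 * m + 1) * x ^ (2 * m + 1) := by
  rw [p.eval_eq_sum_range' hk, p.eval_eq_sum_range' hk]
  exact sum_range_two_mul_sub_neg_div_two p.coeff x k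

lemma Polynomial.eval_inv_sub_eval_neg_inv_div_two (p : Polynomial ℝ) (ω : ℝ) :
    (p.eval ω⁻¹ - p.eval (-ω⁻¹)) / 2
      = ∑ m ∈ Finset.range (p.natDegree + 1), p.coeff (2 * m + 1) * ω ^ (-(2 * m + 1 : ℤ)) := by
  rw [p.eval_sub_eval_neg_div_two ω⁻¹ (k := p.natDegree + 1) (by omega)]
  refine Finset.sum_congr rfl fun m _ => ?_
  rw [show (-(2 * m + 1 : ℤ)) = -((2 * m + 1 : ℕ) : ℤ) by push_cast; ring, zpow_neg,
    zpow_natCast, inv_pow]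

lemma abs_sub_oddPart_lt {h q : ℝ → ℝ} (hodd : ∀ x, h (-x) = -h x) {x ε : ℝ}
    (hx : |q x - h x| < ε) (hnegx : |q (-x) - h (-x)| < ε) :
    |h x - (q x - q (-x)) / 2| < ε := by
  rw [hodd] at hnegx
  rw [abs_lt] at *
  constructor <;> linarith

lemma inv_mem_Icc_of_le_abs {Ω ω : ℝ} (hΩ : 0 < Ω) (hω : Ω ≤ |ω|) : ω⁻¹ ∈ Icc (-Ω⁻¹) Ω⁻¹ :=
  abs_le.1 (abs_inv ω ▸ inv_anti₀ hΩ hω)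

lemma le_abs_inv_of_mem_Icc {Ω x : ℝ} (hx : x ∈ Icc (-Ω⁻¹) Ω⁻¹) (hx0 : x ≠ 0) : Ω ≤ |x⁻¹| := by
  have hx_le : |x| ≤ Ω⁻¹ := abs_le.2 hx
  have hΩ : 0 < Ω := inv_pos.1 ((abs_pos.2 hx0).trans_le hx_le)
  rwa [abs_inv, le_inv_comm₀ hΩ (abs_pos.2 hx0)]

lemma continuousAt_comp_inv_zero {g : ℝ → ℝ} (hg_lim : Tendsto g (cocompact ℝ) (𝓝 0))
    (hg0 : g 0 = 0) : ContinuousAt (fun x => g x⁻¹) 0 := by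
  rw [← continuousWithinAt_compl_self, ContinuousWithinAt, inv_zero, hg0]
  exact hg_lim.comp (Metric.cobounded_eq_cocompact (α := ℝ) ▸ tendsto_inv₀_nhdsNE_zero)

lemma continuousOn_comp_inv_Icc {Ω : ℝ} {g : ℝ → ℝ}
    (hg_cont : ContinuousOn g {ω : ℝ | Ω ≤ |ω|}) (hg_lim : Tendsto g (cocompact ℝ) (𝓝 0))
    (hg0 : g 0 = 0) : ContinuousOn (fun x => g x⁻¹) (Icc (-Ω⁻¹) Ω⁻¹) := by
  intro x hx
  rcases eq_or_ne x 0 with rfl | hx0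
  · exact (continuousAt_comp_inv_zero hg_lim hg0).continuousWithinAt
  · have hpunct : ContinuousOn (fun x => g x⁻¹) (Icc (-Ω⁻¹) Ω⁻¹ ∩ {0}ᶜ) :=
      hg_cont.comp (continuousOn_inv₀.mono inter_subset_right)
        fun y hy => le_abs_inv_of_mem_Icc hy.1 hy.2
    exact (continuousWithinAt_inter (isOpen_compl_singleton.mem_nhds hx0)).1 (hpunct x ⟨hx, hx0⟩)

theorem stmt15
    (Ω : ℝ) (hΩ : 0 < Ω)
    (g : ℝ → ℝ)
    (hg_cont : ContinuousOn g {ω : ℝ | Ω ≤ |ω|})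
    (hg_lim : Tendsto g (cocompact ℝ) (nhds 0))
    (hg_odd : ∀ ω : ℝ, g (-ω) = -g ω)
    (ε : ℝ) (hε : 0 < ε) :
    ∃ (d : ℕ) (b : ℕ → ℝ),
      ∀ ω : ℝ, Ω ≤ |ω| →
        |g ω - ∑ m ∈ Finset.range (d + 1), b m * ω ^ (-(2 * m + 1 : ℤ))| ≤ ε := by
  have hg0 : g 0 = 0 := by linarith [neg_zero (G := ℝ) ▸ hg_odd 0]
  have hodd : ∀ x : ℝ, g (-x)⁻¹ = -g x⁻¹ := fun x => inv_neg (a := x) ▸ hg_odd x⁻¹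
  -- `x ↦ g x⁻¹` needs no special case at the origin: `0⁻¹ = 0` and `g 0 = 0`
  obtain ⟨p, hp⟩ := exists_polynomial_near_of_continuousOn (-Ω⁻¹) Ω⁻¹ _
    (continuousOn_comp_inv_Icc hg_cont hg_lim hg0) ε hε
  refine ⟨p.natDegree, fun m => p.coeff (2 * m + 1), fun ω hω => ?_⟩
  have hx := inv_mem_Icc_of_le_abs hΩ hω
  have hnegx : -ω⁻¹ ∈ Icc (-Ω⁻¹) Ω⁻¹ :=
    inv_neg (a := ω) ▸ inv_mem_Icc_of_le_abs hΩ (by rwa [abs_neg])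
  have hclose :=
    abs_sub_oddPart_lt (h := fun x => g x⁻¹) (q := p.eval) hodd (hp _ hx) (hp _ hnegx)
  rw [← p.eval_inv_sub_eval_neg_inv_div_two]
  simpa only [inv_inv] using hclose.le
end
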